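/- arXiv:2104.12711 — 6 statements merged into one kernel-verified Lean document; each statement's English description precedes it below -/
import Mathlib

section
/- Let h ≥ 2 and let q be a prime power. Let F_q = {λ_1, ..., λ_q} be the finite field with q elements and let F_{q^h} be an extension field of F_q of degree h. Let θ be a generator of the cyclic multiplicative group F_{q^h}^×. Then for each j ∈ {1, ..., q} there is a unique integer a_j ∈ {1, 2, ..., q^h − 2} such that θ^{a_j} = θ − λ_j, the set A = {a_j : j ∈ {1, ..., q}} has cardinality q, and A is a classical Sidon set of order h modulo q^h − 1: any two h-tuples (a_1, ..., a_h) and (a'_1, ..., a'_h) of elements of A (each listed in nondecreasing order) whose sums are congruent modulo q^h − 1 must be equal. -/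
open Polynomial

/-- Preimage multisets exist for surjective-onto-a-multiset maps. -/
lemma aux_exists_map {α β : Type*} (g : α → β) :
    ∀ (s : Multiset β), (∀ b ∈ s, ∃ a, g a = b) → ∃ t : Multiset α, t.map g = s := by
  intro s
  induction s using Multiset.induction_on with
  | empty => exact fun _ => ⟨0, rfl⟩
  | cons b s ih =>
    intro H
    obtain ⟨a, ha⟩ := H b (Multiset.mem_cons_self b s)
    obtain ⟨t, ht⟩ := ih fun x hx => H x (Multiset.mem_cons_of_mem hx)
    exact ⟨a ::ₘ t, by simp [ha, ht]⟩

lemma aux_pow_sum {M : Type*} [CommMonoid M] (a : M) :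
    ∀ (m : Multiset ℕ), a ^ m.sum = (m.map (a ^ ·)).prod := by
  intro m
  induction m using Multiset.induction_on with
  | empty => simp
  | cons n m ih => simp [pow_add, ih]

/-- `A` is a classical Sidon set of order `h` modulo `m`: any two multisets of `h`
elements of `A` whose sums are congruent modulo `m` are equal. -/
def IsModSidonSet (A : Set ℤ) (h : ℕ) (m : ℤ) : Prop :=
  ∀ s t : Multiset ℤ, Multiset.card s = h → Multiset.card t = h →
    (∀ a ∈ s, a ∈ A) → (∀ a ∈ t, a ∈ A) → s.sum ≡ t.sum [ZMOD m] → s = t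

/-- Bose–Chowla theorem. -/
theorem stmt_0 (h q : ℕ) (hh : 2 ≤ h) (p k : ℕ) (hp : p.Prime) (hk : 0 < k)
    (hq : q = p ^ k) (F K : Type*) [Field F] [Fintype F] (hcard : Fintype.card F = q)
    [Field K] [Algebra F K] (hrank : Module.finrank F K = h)
    (θ : Kˣ) (hθ : ∀ x : Kˣ, x ∈ Subgroup.zpowers θ) :
    ∃ f : F → ℕ,
      (∀ lam : F, 1 ≤ f lam ∧ f lam ≤ q ^ h - 2 ∧
        (θ : K) ^ (f lam) = (θ : K) - algebraMap F K lam) ∧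
      (∀ lam : F, ∀ a : ℕ, 1 ≤ a → a ≤ q ^ h - 2 →
        (θ : K) ^ a = (θ : K) - algebraMap F K lam → a = f lam) ∧
      Function.Injective f ∧
      (Set.range (fun lam => (f lam : ℤ))).ncard = q ∧
      IsModSidonSet (Set.range (fun lam => (f lam : ℤ))) h ((q : ℤ) ^ h - 1) := by
  classical
  have hq2 : 2 ≤ q := by
    subst hq
    exact hp.two_le.trans (Nat.le_self_pow hk.ne' p)
  have hqh : 2 ≤ q ^ h := le_trans hq2 (Nat.le_self_pow (by omega) q)
  have hfd : FiniteDimensional F K := .of_finrank_pos (by omega)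
  haveI : Finite K := Module.finite_of_finite F
  haveI : Fintype K := Fintype.ofFinite K
  have hcardK : Fintype.card K = q ^ h := by
    rw [Module.card_eq_pow_finrank (K := F) (V := K), hcard, hrank]
  set N := q ^ h - 1 with hN
  have hN1 : 1 ≤ N := by omega
  have hord : orderOf θ = N := by
    rw [orderOf_eq_card_of_forall_mem_zpowers hθ, Nat.card_units,
      Nat.card_eq_fintype_card, hcardK]
  -- adjoin θ is everything
  have hadj : IntermediateField.adjoin F {(θ : K)} = ⊤ := by
    rw [eq_top_iff]
    intro x _
    by_cases hx : x = 0
    · rw [hx]; exact zero_mem _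
    · obtain ⟨n, hn⟩ := hθ (Units.mk0 x hx)
      have hxv : x = (θ : K) ^ n := by
        have := congrArg Units.val hn
        simpa [Units.val_zpow_eq_zpow_val] using this.symm
      rw [hxv]
      exact zpow_mem (IntermediateField.mem_adjoin_simple_self F _) n
  have hint : IsIntegral F ((θ : K)) := .of_finite F _
  have hmindeg : (minpoly F ((θ : K))).natDegree = h := by
    have h1 := IntermediateField.adjoin.finrank hint
    rw [hadj] at h1
    rw [← h1, IntermediateField.finrank_top', hrank]
  have hnotF : ∀ μ : F, (θ : K) ≠ algebraMap F K μ := by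
    intro μ hμ
    have : (minpoly F ((θ : K))).natDegree = 1 := by
      rw [hμ, minpoly.eq_X_sub_C, natDegree_X_sub_C]
    omega
  have hne : ∀ lam : F, (θ : K) - algebraMap F K lam ≠ 0 := by
    intro lam h0
    exact hnotF lam (by rwa [sub_eq_zero] at h0)
  -- existence of discrete log
  have key : ∀ lam : F, ∃ a : ℕ, 1 ≤ a ∧ a ≤ q ^ h - 2 ∧
      (θ : K) ^ a = (θ : K) - algebraMap F K lam := by
    intro lam
    obtain ⟨n, hn⟩ := (isOfFinOrder_of_finite θ).mem_powers_iff_mem_zpowers.2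
      (hθ (Units.mk0 _ (hne lam)))
    beta_reduce at hn
    have hmod : θ ^ (n % N) = Units.mk0 _ (hne lam) := by
      rw [← hord, pow_mod_orderOf, hn]
    have hval : (θ : K) ^ (n % N) = (θ : K) - algebraMap F K lam := by
      have := congrArg Units.val hmod
      simpa using this
    refine ⟨n % N, ?_, ?_, hval⟩
    · rcases Nat.eq_zero_or_pos (n % N) with h0 | h0
      · exfalso
        rw [h0, pow_zero] at hval
        apply hnotF (lam + 1)
        rw [map_add, map_one]
        linear_combination -hval
      · exact h0
    · have := Nat.mod_lt n (show 0 < N by omega)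
      omega
  choose f hf1 hf2 hf3 using key
  -- injectivity of pow on [0, N)
  have hpowinj : ∀ a b : ℕ, a < N → b < N → (θ : K) ^ a = (θ : K) ^ b → a = b := by
    intro a b ha hb hab
    have hu : θ ^ a = θ ^ b := Units.ext (by simpa using hab)
    have := pow_eq_pow_iff_modEq.mp hu
    rw [hord] at this
    unfold Nat.ModEq at this
    rwa [Nat.mod_eq_of_lt ha, Nat.mod_eq_of_lt hb] at this
  have huniq : ∀ lam : F, ∀ a : ℕ, 1 ≤ a → a ≤ q ^ h - 2 →
      (θ : K) ^ a = (θ : K) - algebraMap F K lam → a = f lam := by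
    intro lam a _ ha2 hae
    exact hpowinj a (f lam) (by omega) (by have := hf2 lam; omega)
      (by rw [hae, hf3])
  have hfinj : Function.Injective f := by
    intro a b hab
    have : (θ : K) - algebraMap F K a = (θ : K) - algebraMap F K b := by
      rw [← hf3 a, ← hf3 b, hab]
    have h2 : algebraMap F K a = algebraMap F K b := by linear_combination -this
    exact (algebraMap F K).injective h2
  have hginj : Function.Injective (fun lam : F => (f lam : ℤ)) := by
    intro a b hab
    have hab' : ((f a : ℤ)) = ((f b : ℤ)) := hab
    exact hfinj (by exact_mod_cast hab')
  refine ⟨f, fun lam => ⟨hf1 lam, hf2 lam, hf3 lam⟩, huniq, hfinj, ?_, ?_⟩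
  · rw [← Nat.card_coe_set_eq, Nat.card_range_of_injective hginj,
      Nat.card_eq_fintype_card, hcard]
  · -- Sidon property
    intro s t hcs hct hsA htA hsum
    obtain ⟨Ls, hLs⟩ := aux_exists_map (fun lam : F => (f lam : ℤ)) s
      (fun b hb => hsA b hb)
    obtain ⟨Lt, hLt⟩ := aux_exists_map (fun lam : F => (f lam : ℤ)) t
      (fun b hb => htA b hb)
    have hsums : s.sum = (((Ls.map f).sum : ℕ) : ℤ) := by
      rw [← hLs]
      simp [Multiset.map_map, Function.comp]
    have hsumt : t.sum = (((Lt.map f).sum : ℕ) : ℤ) := by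
      rw [← hLt]
      simp [Multiset.map_map, Function.comp]
    have hmodN : (Ls.map f).sum ≡ (Lt.map f).sum [MOD N] := by
      have hcast : ((q : ℤ) ^ h - 1) = (N : ℤ) := by
        rw [hN]
        push_cast [Nat.cast_sub (by omega : 1 ≤ q ^ h)]
        ring
      rw [hsums, hsumt, hcast] at hsum
      exact Int.natCast_modEq_iff.mp hsum
    have hpoweq : (θ : K) ^ (Ls.map f).sum = (θ : K) ^ (Lt.map f).sum := by
      have : θ ^ (Ls.map f).sum = θ ^ (Lt.map f).sum :=
        pow_eq_pow_iff_modEq.mpr (by rwa [hord])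
      have := congrArg Units.val this
      simpa using this
    have hprod : (Ls.map (fun l => (θ : K) - algebraMap F K l)).prod =
        (Lt.map (fun l => (θ : K) - algebraMap F K l)).prod := by
      have e1 : ∀ (L : Multiset F), (θ : K) ^ (L.map f).sum =
          (L.map (fun l => (θ : K) - algebraMap F K l)).prod := by
        intro L
        rw [aux_pow_sum, Multiset.map_map]
        exact congrArg Multiset.prod (Multiset.map_congr rfl fun x _ => hf3 x)
      rw [← e1, ← e1, hpoweq]
    -- polynomials
    set P := (Ls.map (fun l => X - C l)).prod with hP
    set Q := (Lt.map (fun l => X - C l)).prod with hQ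
    have haev : ∀ (L : Multiset F),
        Polynomial.aeval ((θ : K)) (L.map (fun l => X - C l)).prod =
        (L.map (fun l => (θ : K) - algebraMap F K l)).prod := by
      intro L
      rw [map_multiset_prod, Multiset.map_map]
      congr 1
      exact Multiset.map_congr rfl fun x _ => by simp
    have hPQroot : Polynomial.aeval ((θ : K)) P = Polynomial.aeval ((θ : K)) Q := by
      rw [hP, hQ, haev, haev, hprod]
    have hcLs : Multiset.card Ls = h := by
      rw [← hcs, ← hLs, Multiset.card_map]
    have hcLt : Multiset.card Lt = h := by
      rw [← hct, ← hLt, Multiset.card_map]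
    have hPm : P.Monic := monic_multiset_prod_of_monic _ _ fun l _ => monic_X_sub_C l
    have hQm : Q.Monic := monic_multiset_prod_of_monic _ _ fun l _ => monic_X_sub_C l
    have hPd : P.natDegree = h := by
      rw [hP, natDegree_multiset_prod_X_sub_C_eq_card, hcLs]
    have hQd : Q.natDegree = h := by
      rw [hQ, natDegree_multiset_prod_X_sub_C_eq_card, hcLt]
    have hPQ : P = Q := by
      by_contra hne'
      have hsub : P - Q ≠ 0 := sub_ne_zero.mpr hne'
      have hdvd : minpoly F ((θ : K)) ∣ P - Q := by
        apply minpoly.dvd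
        rw [map_sub, hPQroot, sub_self]
      have hle : h ≤ (P - Q).natDegree := by
        rw [← hmindeg]
        exact Polynomial.natDegree_le_of_dvd hdvd hsub
      have hdeg : P.degree = Q.degree := by
        rw [Polynomial.degree_eq_natDegree hPm.ne_zero,
          Polynomial.degree_eq_natDegree hQm.ne_zero, hPd, hQd]
      have hlt : (P - Q).degree < P.degree :=
        Polynomial.degree_sub_lt hdeg hPm.ne_zero
          (by rw [hPm.leadingCoeff, hQm.leadingCoeff])
      have hlt2 : (P - Q).natDegree < P.natDegree :=
        Polynomial.natDegree_lt_natDegree hsub hlt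
      omega
    have hLsLt : Ls = Lt := by
      have h1 := roots_multiset_prod_X_sub_C Ls
      have h2 := roots_multiset_prod_X_sub_C Lt
      rw [← hP] at h1
      rw [← hQ] at h2
      rw [← h1, ← h2, hPQ]
    rw [← hLs, ← hLt, hLsLt]
end

section
/- For every integer h ≥ 2 and every prime power q, F_h(q^h − 2) ≥ q; that is, there exists a classical Sidon set of order h contained in {1, 2, ..., q^h − 2} of cardinality q. -/
/-- `A` is a classical Sidon set of order `h` (a `B_h`-set): any two multisets of `h`
elements of `A` with the same sum are equal. -/
def IsSidonSet (A : Set ℤ) (h : ℕ) : Prop :=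
  ∀ s t : Multiset ℤ, Multiset.card s = h → Multiset.card t = h →
    (∀ a ∈ s, a ∈ A) → (∀ a ∈ t, a ∈ A) → s.sum = t.sum → s = t

/-- `Fh h n` is the largest cardinality of a classical Sidon set of order `h`
contained in `{1, …, n}`. -/
noncomputable def Fh (h n : ℕ) : ℕ :=
  sSup {k | ∃ A : Finset ℤ, (A : Set ℤ) ⊆ Set.Icc 1 (n : ℤ) ∧ A.card = k ∧ IsSidonSet (↑A) h}

open Polynomial IntermediateField

/-- multiset version of `pow_sum` -/
lemma BC.pow_multiset_sum {G : Type*} [CommMonoid G] (b : G) (s : Multiset ℕ) :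
    b ^ s.sum = (s.map (b ^ ·)).prod := by
  induction s using Multiset.induction with
  | empty => simp
  | cons a s ih => simp [pow_add, ih]

/-- The subfield of `x` with `x ^ p ^ k = x`. -/
def BC.fixedSubfield (E : Type*) [Field E] (p k : ℕ) [Fact p.Prime] [CharP E p] :
    Subfield E where
  carrier := {x | x ^ p ^ k = x}
  mul_mem' := by
    intro a b ha hb
    simp only [Set.mem_setOf_eq] at *
    rw [mul_pow, ha, hb]
  one_mem' := by simp
  add_mem' := by
    intro a b ha hb
    simp only [Set.mem_setOf_eq] at *
    rw [add_pow_char_pow a b p k, ha, hb]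
  zero_mem' := by
    simp only [Set.mem_setOf_eq]
    exact zero_pow (pow_ne_zero k (Fact.out (p := p.Prime)).ne_zero)
  neg_mem' := by
    intro a ha
    simp only [Set.mem_setOf_eq] at *
    have := map_neg (iterateFrobenius E p k) a
    simp only [iterateFrobenius_def] at this
    rw [this, ha]
  inv_mem' := by
    intro a ha
    simp only [Set.mem_setOf_eq] at *
    rw [inv_pow, ha]

lemma BC.mem_fixedSubfield {E : Type*} [Field E] {p k : ℕ} [Fact p.Prime] [CharP E p] {x : E} :
    x ∈ BC.fixedSubfield E p k ↔ x ^ p ^ k = x := Iff.rfl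

lemma BC.card_fixedSubfield (E : Type*) [Field E] [Finite E]
    (p k h : ℕ) [Fact p.Prime] [CharP E p] (hk : k ≠ 0) (hh : 2 ≤ h)
    (hcard : Nat.card E = (p ^ k) ^ h) :
    Nat.card (BC.fixedSubfield E p k) = p ^ k := by
  classical
  haveI : Fintype E := Fintype.ofFinite E
  have hcard : Fintype.card E = (p ^ k) ^ h := by rw [← Nat.card_eq_fintype_card]; exact hcard
  have hp : p.Prime := Fact.out
  set q := p ^ k with hq
  have hq2 : 2 ≤ q := Nat.one_lt_pow hk hp.one_lt
  have hqh2 : 2 ≤ q ^ h := le_trans hq2 (Nat.le_self_pow (by omega) q)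
  -- the set as a finset
  set S : Finset E := Finset.univ.filter (fun x => x ^ q = x) with hS
  have hcardS : Nat.card (BC.fixedSubfield E p k) = S.card := by
    have h1 : Nat.card (BC.fixedSubfield E p k) = Nat.card {x : E // x ^ q = x} :=
      Nat.card_congr (Equiv.subtypeEquivRight (fun x => Iff.rfl))
    rw [h1, Nat.card_eq_fintype_card, hS, Fintype.card_subtype]
  -- upper bound via roots
  have hub : S.card ≤ q := by
    set f : E[X] := X ^ q - X with hf
    have hfne : f ≠ 0 := FiniteField.X_pow_card_pow_sub_X_ne_zero E hk hp.one_lt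
    have hsub : S ⊆ f.roots.toFinset := by
      intro x hx
      rw [Finset.mem_filter] at hx
      rw [Multiset.mem_toFinset, mem_roots hfne]
      simp [hf, IsRoot.def, sub_eq_zero, hx.2]
    calc S.card ≤ f.roots.toFinset.card := Finset.card_le_card hsub
      _ ≤ Multiset.card f.roots := Multiset.toFinset_card_le _
      _ ≤ f.natDegree := f.card_roots'
      _ = q := FiniteField.X_pow_card_pow_sub_X_natDegree_eq E hk hp.one_lt
  -- lower bound via cyclic group
  have hlb : q ≤ S.card := by
    obtain ⟨ξ, hξ⟩ := IsCyclic.exists_generator (α := Eˣ)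
    have hord : orderOf ξ = q ^ h - 1 := by
      rw [orderOf_eq_card_of_forall_mem_zpowers hξ, Nat.card_units,
        Nat.card_eq_fintype_card, hcard]
    have hdvd : q - 1 ∣ q ^ h - 1 := by
      simpa using Nat.sub_dvd_pow_sub_pow q 1 h
    set y : Eˣ := ξ ^ ((q ^ h - 1) / (q - 1)) with hy
    have hordy : orderOf y = q - 1 := by
      rw [hy, orderOf_pow, hord, Nat.gcd_eq_right (Nat.div_dvd_of_dvd hdvd),
        Nat.div_div_self hdvd (by omega)]
    have hyq : ∀ j : ℕ, ((y ^ j : Eˣ) : E) ^ q = ((y ^ j : Eˣ) : E) := by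
      intro j
      have h1 : (y ^ j) ^ (q - 1) = 1 := by
        rw [← pow_mul, mul_comm, pow_mul, ← hordy, pow_orderOf_eq_one, one_pow]
      have : ((y ^ j : Eˣ) : E) ^ (q - 1) = 1 := by
        rw [← Units.val_pow_eq_pow_val, h1, Units.val_one]
      calc ((y ^ j : Eˣ) : E) ^ q = ((y ^ j : Eˣ) : E) ^ (q - 1) * ((y ^ j : Eˣ) : E) := by
            rw [← pow_succ]; congr 1; omega
        _ = ((y ^ j : Eˣ) : E) := by rw [this, one_mul]
    set T : Finset E := insert (0 : E) ((Finset.range (q - 1)).image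
      (fun j => ((y ^ j : Eˣ) : E))) with hT
    have hTS : T ⊆ S := by
      intro x hx
      rw [hT, Finset.mem_insert] at hx
      rw [hS, Finset.mem_filter]
      refine ⟨Finset.mem_univ _, ?_⟩
      rcases hx with rfl | hx
      · exact zero_pow (by omega)
      · obtain ⟨j, _, rfl⟩ := Finset.mem_image.mp hx
        exact hyq j
    have himg : ((Finset.range (q - 1)).image (fun j => ((y ^ j : Eˣ) : E))).card = q - 1 := by
      rw [Finset.card_image_of_injOn, Finset.card_range]
      intro i hi j hj hij
      rw [Finset.coe_range, Set.mem_Iio] at hi hj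
      have huv : y ^ i = y ^ j := Units.ext hij
      exact pow_injOn_Iio_orderOf (by rwa [Set.mem_Iio, hordy]) (by rwa [Set.mem_Iio, hordy]) huv
    have h0T : (0 : E) ∉ (Finset.range (q - 1)).image (fun j => ((y ^ j : Eˣ) : E)) := by
      rw [Finset.mem_image]
      rintro ⟨j, _, hj⟩
      exact (y ^ j).ne_zero hj
    have hTcard : T.card = q := by
      rw [hT, Finset.card_insert_of_notMem h0T, himg]
      omega
    calc q = T.card := hTcard.symm
      _ ≤ S.card := Finset.card_le_card hTS
  omega

/-- The Bose–Chowla theorem. -/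
theorem BC.bose_chowla {E : Type*} [Field E] [Finite E]
    (q h : ℕ) (hq2 : 2 ≤ q) (hh : 2 ≤ h)
    (hcard : Nat.card E = q ^ h)
    (F : Subfield E) (hF : Nat.card F = q) :
    ∃ A : Finset ℤ, (A : Set ℤ) ⊆ Set.Icc 1 ((q : ℤ) ^ h - 2) ∧ A.card = q ∧
      IsSidonSet (↑A) h := by
  classical
  haveI : Fintype E := Fintype.ofFinite E
  have hcard : Fintype.card E = q ^ h := by rw [← Nat.card_eq_fintype_card]; exact hcard
  have hqh : q + 1 ≤ q ^ h := by
    calc q + 1 ≤ q * q := by nlinarith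
      _ ≤ q ^ h := by
        calc q * q = q ^ 2 := (sq q).symm
          _ ≤ q ^ h := Nat.pow_le_pow_right (by omega) hh
  haveI : Fintype F := Fintype.ofFinite F
  have hFcard : Fintype.card F = q := by rw [← Nat.card_eq_fintype_card, hF]
  -- generator
  obtain ⟨ξ, hξ⟩ := IsCyclic.exists_generator (α := Eˣ)
  have hord : orderOf ξ = q ^ h - 1 := by
    rw [orderOf_eq_card_of_forall_mem_zpowers hξ, Nat.card_units,
      Nat.card_eq_fintype_card, hcard]
  set θ : E := (ξ : E) with hθ
  -- θ ∉ F
  have hθF : θ ∉ F := by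
    intro hmem
    have hθ0 : (⟨θ, hmem⟩ : F) ≠ 0 := by
      intro hc
      apply ξ.ne_zero
      simpa [hθ] using congrArg Subtype.val hc
    have h1 : (⟨θ, hmem⟩ : F) ^ (Fintype.card F - 1) = 1 :=
      FiniteField.pow_card_sub_one_eq_one _ hθ0
    have h2 : θ ^ (q - 1) = 1 := by
      have := congrArg Subtype.val h1
      simpa [hFcard] using this
    have h3 : ξ ^ (q - 1) = 1 := Units.ext (by simpa using h2)
    have h4 : orderOf ξ ∣ q - 1 := orderOf_dvd_of_pow_eq_one h3
    rw [hord] at h4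
    have := Nat.le_of_dvd (by omega) h4
    omega
  -- finite dimension
  haveI : FiniteDimensional F E := Module.Finite.of_finite
  have hrank : Module.finrank F E = h := by
    have := Module.card_eq_pow_finrank (K := F) (V := E)
    rw [hcard, hFcard] at this
    exact (Nat.pow_right_injective hq2 this).symm
  -- θ generates E
  have hint : IsIntegral F θ := IsIntegral.of_finite F θ
  have htop : F⟮θ⟯ = ⊤ := by
    rw [eq_top_iff]
    intro x _
    by_cases hx : x = 0
    · rw [hx]; exact zero_mem _
    · obtain ⟨n, hn⟩ := (mem_powers_iff_mem_zpowers).2 (hξ (Units.mk0 x hx))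
      have hxn : x = θ ^ n := by
        have := congrArg Units.val hn
        simpa [hθ] using this.symm
      rw [hxn]
      exact pow_mem (IntermediateField.mem_adjoin_simple_self F θ) n
  have hdeg : (minpoly F θ).natDegree = h := by
    have h1 := IntermediateField.adjoin.finrank hint
    rw [htop] at h1
    rw [← h1, ← hrank, IntermediateField.finrank_top']
  -- key : low degree polynomials vanishing at θ are zero
  have hkey : ∀ g : Polynomial F, Polynomial.aeval θ g = 0 → g.degree < (h : ℕ) → g = 0 := by
    intro g hg0 hgd
    by_contra hne
    have hdvd : minpoly F θ ∣ g := minpoly.dvd F θ hg0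
    have h1 : (minpoly F θ).degree ≤ g.degree := degree_le_of_dvd hdvd hne
    have h2 : (minpoly F θ).degree = (h : ℕ) := by
      rw [degree_eq_natDegree (minpoly.ne_zero hint), hdeg]
    rw [h2] at h1
    exact absurd (lt_of_le_of_lt h1 hgd) (lt_irrefl _)
  -- the units θ + c
  have hne0 : ∀ c : F, θ + (c : E) ≠ 0 := by
    intro c hc
    apply hθF
    have h1 : θ = -(c : E) := eq_neg_of_add_eq_zero_left hc
    rw [h1]; exact F.neg_mem c.2
  set u : F → Eˣ := fun c => Units.mk0 (θ + (c : E)) (hne0 c) with hu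
  -- exponents
  have hex : ∀ c : F, ∃ m : ℕ, 0 < m ∧ m < q ^ h - 1 ∧ ξ ^ m = u c := by
    intro c
    obtain ⟨n, hn⟩ := (mem_powers_iff_mem_zpowers).2 (hξ (u c))
    have h5 : ξ ^ n = ξ ^ (n % orderOf ξ) := (pow_mod_orderOf ξ n).symm
    have hmeq : ξ ^ (n % (q ^ h - 1)) = u c := by
      rw [← hord, ← h5]; exact hn
    refine ⟨n % (q ^ h - 1), ?_, Nat.mod_lt _ (by omega), hmeq⟩
    rcases Nat.eq_zero_or_pos (n % (q ^ h - 1)) with h0 | h0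
    · exfalso
      rw [h0, pow_zero] at hmeq
      have h1 : θ + (c : E) = 1 := by
        have := congrArg Units.val hmeq
        simpa [hu] using this.symm
      apply hθF
      have h2 : θ = 1 - (c : E) := by rw [← h1]; ring
      rw [h2]
      exact F.sub_mem F.one_mem c.2
    · exact h0
  choose m hm1 hm2 hm3 using hex
  have minj : Function.Injective m := by
    intro c c' hcc
    have h1 : u c = u c' := by rw [← hm3 c, ← hm3 c', hcc]
    have h2 : θ + (c : E) = θ + (c' : E) := by
      have := congrArg Units.val h1
      simpa [hu] using this
    exact Subtype.ext (add_left_cancel h2)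
  set mZ : F → ℤ := fun c => (m c : ℤ) with hmZdef
  have mZinj : Function.Injective mZ := by
    intro c c' hcc
    apply minj
    have h1 : ((m c : ℤ)) = ((m c' : ℤ)) := hcc
    exact_mod_cast h1
  set A : Finset ℤ := Finset.image mZ Finset.univ with hA
  have hcast : ((q ^ h - 2 : ℕ) : ℤ) = (q : ℤ) ^ h - 2 := by
    have h2 : 2 ≤ q ^ h := by omega
    push_cast [Nat.cast_sub h2]
    ring
  have hsumcast : ∀ (w : Multiset F), (w.map mZ).sum = ((w.map m).sum : ℤ) := by
    intro w
    rw [Nat.cast_multiset_sum, Multiset.map_map]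
    rfl
  have halg : ∀ c : F, (algebraMap F E) c = (c : E) := fun c => rfl
  have haev : ∀ (w : Multiset F),
      Polynomial.aeval θ ((w.map (fun c => X + C c)).prod) =
        (w.map (fun c : F => θ + (c : E))).prod := by
    intro w
    rw [map_multiset_prod, Multiset.map_map]
    apply congrArg Multiset.prod
    apply Multiset.map_congr rfl
    intro c _
    simp [Function.comp, halg, add_comm]
  refine ⟨A, ?_, ?_, ?_⟩
  · -- subset
    intro a ha
    rw [hA, Finset.coe_image] at ha
    obtain ⟨c, _, rfl⟩ := ha
    rw [Set.mem_Icc]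
    constructor
    · show (1 : ℤ) ≤ ((m c : ℕ) : ℤ)
      exact_mod_cast hm1 c
    · show ((m c : ℕ) : ℤ) ≤ (q : ℤ) ^ h - 2
      have h1 : m c ≤ q ^ h - 2 := by have := hm2 c; omega
      calc ((m c : ℕ) : ℤ) ≤ ((q ^ h - 2 : ℕ) : ℤ) := by exact_mod_cast h1
        _ = (q : ℤ) ^ h - 2 := hcast
  · rw [hA, Finset.card_image_of_injective _ mZinj, Finset.card_univ, hFcard]
  · -- Sidon
    intro s t hs ht hsA htA hsum
    set g : ℤ → F := Function.invFun mZ with hgdef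
    have hginv : ∀ a ∈ (A : Set ℤ), mZ (g a) = a := by
      intro a ha
      rw [hA, Finset.coe_image] at ha
      obtain ⟨c, _, rfl⟩ := ha
      rw [hgdef, Function.leftInverse_invFun mZinj c]
    set cs : Multiset F := s.map g with hcsdef
    set ds : Multiset F := t.map g with hdsdef
    have hscs : cs.map mZ = s := by
      rw [hcsdef, Multiset.map_map]
      have h1 : ∀ a ∈ s, (mZ ∘ g) a = id a := fun a ha => hginv a (hsA a ha)
      rw [Multiset.map_congr rfl h1, Multiset.map_id]
    have htds : ds.map mZ = t := by
      rw [hdsdef, Multiset.map_map]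
      have h1 : ∀ a ∈ t, (mZ ∘ g) a = id a := fun a ha => hginv a (htA a ha)
      rw [Multiset.map_congr rfl h1, Multiset.map_id]
    have hcs : Multiset.card cs = h := by rw [hcsdef, Multiset.card_map, hs]
    have hds : Multiset.card ds = h := by rw [hdsdef, Multiset.card_map, ht]
    have hsum' : (cs.map m).sum = (ds.map m).sum := by
      have h1 : ((cs.map m).sum : ℤ) = ((ds.map m).sum : ℤ) := by
        rw [← hsumcast, ← hsumcast, hscs, htds, hsum]
      exact_mod_cast h1
    have hprod : (cs.map u).prod = (ds.map u).prod := by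
      have e : ∀ w : Multiset F, (w.map u).prod = ξ ^ (w.map m).sum := by
        intro w
        rw [BC.pow_multiset_sum, Multiset.map_map]
        apply congrArg Multiset.prod
        apply Multiset.map_congr rfl
        intro c _
        exact (hm3 c).symm
      rw [e, e, hsum']
    have hprodE : (cs.map (fun c : F => θ + (c : E))).prod = (ds.map (fun c : F => θ + (c : E))).prod := by
      have e2 : ∀ w : Multiset F,
          (((w.map u).prod : Eˣ) : E) = (w.map (fun c : F => θ + (c : E))).prod := by
        intro w
        rw [← Units.coeHom_apply, map_multiset_prod, Multiset.map_map]
        apply congrArg Multiset.prod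
        apply Multiset.map_congr rfl
        intro c _
        simp [hu]
      have h1 : (((cs.map u).prod : Eˣ) : E) = (((ds.map u).prod : Eˣ) : E) :=
        congrArg Units.val hprod
      rwa [e2, e2] at h1
    set P : Polynomial F := (cs.map (fun c => X + C c)).prod with hP
    set Q : Polynomial F := (ds.map (fun c => X + C c)).prod with hQ
    have monicP : P.Monic := monic_multiset_prod_of_monic cs _ (fun c _ => monic_X_add_C _)
    have monicQ : Q.Monic := monic_multiset_prod_of_monic ds _ (fun c _ => monic_X_add_C _)
    have hdegmap : ∀ w : Multiset F, ((w.map (fun c : F => X + C c)).prod).natDegree =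
        Multiset.card w := by
      intro w
      have hm : ∀ f ∈ w.map (fun c : F => X + C c), f.Monic := by
        intro f hf
        obtain ⟨c, _, rfl⟩ := Multiset.mem_map.mp hf
        exact monic_X_add_C c
      rw [natDegree_multiset_prod_of_monic _ hm, Multiset.map_map]
      have h1 : (w.map (natDegree ∘ fun c : F => X + C c)) = w.map (fun _ => 1) :=
        Multiset.map_congr rfl (fun c _ => natDegree_X_add_C c)
      rw [h1, Multiset.map_const', Multiset.sum_replicate, smul_eq_mul, mul_one]
    have hdegP : P.natDegree = h := by rw [hP, hdegmap cs, hcs]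
    have hdegQ : Q.natDegree = h := by rw [hQ, hdegmap ds, hds]
    have hPQ : P = Q := by
      by_contra hne
      have haPQ : Polynomial.aeval θ (P - Q) = 0 := by
        rw [map_sub, hP, hQ, haev cs, haev ds, hprodE, sub_self]
      have hdPQ : (P - Q).degree < (h : ℕ) := by
        have h1 : P.degree = Q.degree := by
          rw [degree_eq_natDegree monicP.ne_zero, degree_eq_natDegree monicQ.ne_zero, hdegP, hdegQ]
        have h2 := degree_sub_lt h1 monicP.ne_zero
          (monicP.leadingCoeff.trans monicQ.leadingCoeff.symm)
        rwa [degree_eq_natDegree monicP.ne_zero, hdegP] at h2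
      exact hne (sub_eq_zero.mp (hkey (P - Q) haPQ hdPQ))
    have hrootsval : ∀ (w : Multiset F),
        ((w.map (fun c => X + C c)).prod : Polynomial F).roots = w.map (fun c => -c) := by
      intro w
      have h1 : (w.map (fun c => X + C c)).prod =
          ((w.map (fun c => -c)).map (fun a => X - C a)).prod := by
        rw [Multiset.map_map]
        apply congrArg Multiset.prod
        apply Multiset.map_congr rfl
        intro c _
        simp [sub_neg_eq_add]
      rw [h1, roots_multiset_prod_X_sub_C]
    have hcsds : cs = ds := by
      have h1 : cs.map (fun c => -c) = ds.map (fun c => -c) := by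
        rw [← hrootsval cs, ← hrootsval ds, ← hP, ← hQ, hPQ]
      exact Multiset.map_injective neg_injective h1
    rw [← hscs, ← htds]
    exact congrArg _ hcsds

theorem stmt_1 (h q : ℕ) (hh : 2 ≤ h) (p k : ℕ) (hp : p.Prime) (hk : 0 < k)
    (hq : q = p ^ k) :
    q ≤ Fh h (q ^ h - 2) ∧
    ∃ A : Finset ℤ, (A : Set ℤ) ⊆ Set.Icc 1 ((q : ℤ) ^ h - 2) ∧ A.card = q ∧
      IsSidonSet (↑A) h := by
  haveI : Fact p.Prime := ⟨hp⟩
  have hq2 : 2 ≤ q := by rw [hq]; exact Nat.one_lt_pow (by omega) hp.one_lt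
  have hqh2 : 2 ≤ q ^ h := le_trans hq2 (Nat.le_self_pow (by omega) q)
  set E := GaloisField p (k * h) with hE
  have hcardE : Nat.card E = q ^ h := by
    rw [hE, GaloisField.card p (k * h) (by positivity), hq, ← pow_mul]
  have hcardF : Nat.card (BC.fixedSubfield E p k) = q := by
    rw [BC.card_fixedSubfield E p k h (by omega) hh (by rw [hcardE, hq]), hq]
  obtain ⟨A, hA1, hA2, hA3⟩ :=
    BC.bose_chowla q h hq2 hh hcardE (BC.fixedSubfield E p k) hcardF
  have hcast : ((q ^ h - 2 : ℕ) : ℤ) = (q : ℤ) ^ h - 2 := by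
    push_cast [Nat.cast_sub hqh2]
    ring
  refine ⟨?_, A, hA1, hA2, hA3⟩
  apply le_csSup
  · refine ⟨(Finset.Icc (1 : ℤ) ((q ^ h - 2 : ℕ) : ℤ)).card, ?_⟩
    rintro j ⟨B, hB1, hB2, hB3⟩
    rw [← hB2]
    apply Finset.card_le_card
    intro x hx
    rw [Finset.mem_Icc]
    have h1 := hB1 (Finset.mem_coe.mpr hx)
    rwa [Set.mem_Icc] at h1
  · exact ⟨A, by rw [hcast]; exact hA1, hA2, hA3⟩
end

section
/- Let h ≥ 2, let φ = c_1x_1 + ... + c_hx_h be a linear form with nonzero integer coefficients, let C = |c_1| + ... + |c_h|, and let g be a positive integer. If 𝒜 = (A_1, ..., A_h) is a φ-Sidon system of multiplicity g with A_i ⊆ [1, n] and |A_i| = q for all i ∈ {1, ..., h}, then q^h ≤ g(2Cn + 1). -/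
theorem stmt_9 (h : ℕ) (hh : 2 ≤ h) (c : Fin h → ℤ) (hc : ∀ i, c i ≠ 0)
    (g : ℕ) (hg : 0 < g) (n : ℕ) (hn : 0 < n) (q : ℕ)
    (A : Fin h → Finset ℤ)
    (hsub : ∀ i, A i ⊆ Finset.Icc 1 (n : ℤ))
    (hcard : ∀ i, (A i).card = q)
    (hSidon : ∀ m : ℤ,
      ((Fintype.piFinset A).filter (fun v => ∑ i, c i * v i = m)).card ≤ g) :
    (q : ℤ) ^ h ≤ g * (2 * (∑ i, |c i|) * n + 1) := by
  set C : ℤ := ∑ i, |c i| with hC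
  have hC0 : 0 ≤ C := Finset.sum_nonneg fun i _ => abs_nonneg _
  have hCn0 : 0 ≤ C * n := mul_nonneg hC0 (by positivity)
  have hmem : ∀ v ∈ Fintype.piFinset A,
      (∑ i, c i * v i) ∈ Finset.Icc (-(C * n)) (C * n) := by
    intro v hv
    rw [Fintype.mem_piFinset] at hv
    have habs : |∑ i, c i * v i| ≤ C * n := by
      calc |∑ i, c i * v i| ≤ ∑ i, |c i * v i| := Finset.abs_sum_le_sum_abs _ _
        _ ≤ ∑ i, |c i| * n := by
            apply Finset.sum_le_sum
            intro i _
            rw [abs_mul]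
            have h1 := hsub i (hv i)
            rw [Finset.mem_Icc] at h1
            have h2 : |v i| ≤ (n : ℤ) := abs_le.2 ⟨by linarith [h1.1], h1.2⟩
            exact mul_le_mul_of_nonneg_left h2 (abs_nonneg _)
        _ = C * n := by rw [hC, Finset.sum_mul]
    rw [Finset.mem_Icc]
    exact abs_le.1 habs
  have hcardS : (Fintype.piFinset A).card = q ^ h := by
    simp [Fintype.card_piFinset, hcard]
  have hfib := Finset.card_eq_sum_card_fiberwise hmem
  have hbound : (Fintype.piFinset A).card ≤ (Finset.Icc (-(C * n)) (C * n)).card * g := by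
    rw [hfib]
    calc ∑ m ∈ Finset.Icc (-(C * ↑n)) (C * ↑n),
          ((Fintype.piFinset A).filter (fun v => ∑ i, c i * v i = m)).card
        ≤ ∑ _m ∈ Finset.Icc (-(C * ↑n)) (C * ↑n), g :=
          Finset.sum_le_sum fun m _ => hSidon m
      _ = _ := by rw [Finset.sum_const, smul_eq_mul]
  have hIcc : ((Finset.Icc (-(C * ↑n)) (C * ↑n)).card : ℤ) = 2 * C * n + 1 := by
    rw [Int.card_Icc]
    rw [Int.toNat_of_nonneg (by linarith)]
    ring
  have := hbound
  rw [hcardS] at this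
  have hz : (q : ℤ) ^ h ≤ ((Finset.Icc (-(C * ↑n)) (C * ↑n)).card : ℤ) * g := by
    exact_mod_cast this
  rw [hIcc] at hz
  linarith
end

section
/- Let h ≥ 2, let φ = c_1x_1 + ... + c_hx_h be a linear form with nonzero integer coefficients, let C = |c_1| + ... + |c_h|, and let g be a positive integer. Then limsup as n → ∞ of F_{φ,g}(n)/n^{1/h} is at most (2gC)^{1/h}; in particular it is finite. -/
/-- `Fphi h c g n` is the largest integer `q` such that there exists a `φ`-Sidon system
`𝒜 = (A 0, …, A (h-1))` of multiplicity `g` (for `φ = ∑ i, c i • x i`) with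
`A i ⊆ [1, n]` and `|A i| = q` for all `i`. -/
noncomputable def Fphi (h : ℕ) (c : Fin h → ℤ) (g n : ℕ) : ℕ :=
  sSup {q | ∃ A : Fin h → Finset ℤ,
    (∀ i, A i ⊆ Finset.Icc 1 (n : ℤ)) ∧ (∀ i, (A i).card = q) ∧
    ∀ m : ℤ, ((Fintype.piFinset A).filter (fun v => ∑ i, c i * v i = m)).card ≤ g}

lemma card_Icc_int (S T : ℤ) (hST : S ≤ T) : ((Finset.Icc S T).card : ℤ) = T - S + 1 := by
  rw [Int.card_Icc]
  omega

lemma key_count (h : ℕ) (hh : 2 ≤ h) (c : Fin h → ℤ) (hc : ∀ i, c i ≠ 0)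
    (g : ℕ) (hg : 0 < g) (n q : ℕ) (A : Fin h → Finset ℤ)
    (hsub : ∀ i, A i ⊆ Finset.Icc 1 (n : ℤ)) (hcard : ∀ i, (A i).card = q)
    (hrep : ∀ m : ℤ, ((Fintype.piFinset A).filter (fun v => ∑ i, c i * v i = m)).card ≤ g) :
    (q : ℤ) ^ h ≤ 2 * g * (∑ i, |c i|) * n := by
  have i0 : Fin h := ⟨0, by omega⟩
  have hC1 : (1 : ℤ) ≤ ∑ i, |c i| := by
    have h1 : |c i0| ≤ ∑ i, |c i| :=
      Finset.single_le_sum (f := fun i => |c i|) (fun i _ => abs_nonneg _) (Finset.mem_univ i0)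
    have h2 : (1:ℤ) ≤ |c i0| := Int.one_le_abs (hc i0)
    linarith
  rcases Nat.eq_zero_or_pos q with hq | hq
  · subst hq
    rw [Nat.cast_zero, zero_pow (by omega : h ≠ 0)]
    positivity
  have hA : ∀ i, (A i).Nonempty := fun i => Finset.card_pos.mp (by rw [hcard i]; exact hq)
  have hn : 1 ≤ (n:ℤ) := by
    obtain ⟨a, ha⟩ := hA i0
    have := Finset.mem_Icc.mp (hsub _ ha)
    omega
  have hmem : ∀ v ∈ Fintype.piFinset A,
      (∑ i, c i * v i) ∈ Finset.Icc (∑ i, min (c i) (c i * n)) (∑ i, max (c i) (c i * n)) := by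
    intro v hv
    rw [Fintype.mem_piFinset] at hv
    rw [Finset.mem_Icc]
    constructor
    · apply Finset.sum_le_sum; intro i _
      have h1 := Finset.mem_Icc.mp (hsub i (hv i))
      rcases le_total (c i) 0 with hci | hci
      · exact le_trans (min_le_right _ _) (by nlinarith [h1.2])
      · exact le_trans (min_le_left _ _) (by nlinarith [h1.1])
    · apply Finset.sum_le_sum; intro i _
      have h1 := Finset.mem_Icc.mp (hsub i (hv i))
      rcases le_total (c i) 0 with hci | hci
      · exact le_trans (by nlinarith [h1.1]) (le_max_left _ _)
      · exact le_trans (by nlinarith [h1.2]) (le_max_right _ _)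
  have hcount : (Fintype.piFinset A).card
      = ∑ m ∈ Finset.Icc (∑ i, min (c i) (c i * n)) (∑ i, max (c i) (c i * n)),
        ((Fintype.piFinset A).filter (fun v => ∑ i, c i * v i = m)).card :=
    Finset.card_eq_sum_card_fiberwise hmem
  have hqh : (Fintype.piFinset A).card = q ^ h := by
    rw [Fintype.card_piFinset]
    simp [hcard]
  have hbound : q ^ h ≤
      (Finset.Icc (∑ i, min (c i) (c i * n)) (∑ i, max (c i) (c i * n))).card * g := by
    rw [← hqh, hcount]
    calc _ ≤ ∑ _m ∈ Finset.Icc (∑ i, min (c i) (c i * n)) (∑ i, max (c i) (c i * n)), g :=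
        Finset.sum_le_sum (fun m _ => hrep m)
    _ = _ := by rw [Finset.sum_const, smul_eq_mul]
  have hST : (∑ i, min (c i) (c i * n)) ≤ ∑ i, max (c i) (c i * n) :=
    Finset.sum_le_sum (fun i _ => min_le_max)
  have hIcc : ((Finset.Icc (∑ i, min (c i) (c i * n)) (∑ i, max (c i) (c i * n))).card : ℤ)
      = (∑ i, max (c i) (c i * n)) - (∑ i, min (c i) (c i * n)) + 1 := by
    exact card_Icc_int _ _ hST
  have hTS : (∑ i, max (c i) (c i * n)) - (∑ i, min (c i) (c i * n))
      = (∑ i, |c i|) * ((n:ℤ) - 1) := by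
    rw [← Finset.sum_sub_distrib, Finset.sum_mul]
    apply Finset.sum_congr rfl
    intro i _
    rw [max_sub_min_eq_abs, show c i * (n:ℤ) - c i = c i * ((n:ℤ) - 1) by ring, abs_mul,
      abs_of_nonneg (show (0:ℤ) ≤ (n:ℤ) - 1 by linarith)]
  have hZ : (q:ℤ) ^ h ≤
      ((Finset.Icc (∑ i, min (c i) (c i * n)) (∑ i, max (c i) (c i * n))).card : ℤ) * g := by
    exact_mod_cast hbound
  rw [hIcc, hTS] at hZ
  have hg1 : (1:ℤ) ≤ g := by exact_mod_cast hg
  nlinarith [hZ, mul_nonneg (le_trans zero_le_one hC1) (by linarith : (0:ℤ) ≤ (n:ℤ) - 1)]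

lemma Fphi_pow_le (h : ℕ) (hh : 2 ≤ h) (c : Fin h → ℤ) (hc : ∀ i, c i ≠ 0)
    (g : ℕ) (hg : 0 < g) (n : ℕ) :
    (Fphi h c g n : ℤ) ^ h ≤ 2 * g * (∑ i, |c i|) * n := by
  have hne : {q | ∃ A : Fin h → Finset ℤ,
      (∀ i, A i ⊆ Finset.Icc 1 (n : ℤ)) ∧ (∀ i, (A i).card = q) ∧
      ∀ m : ℤ, ((Fintype.piFinset A).filter (fun v => ∑ i, c i * v i = m)).card ≤ g}.Nonempty := by
    refine ⟨0, fun _ => ∅, fun i => by simp, fun _ => rfl, fun m => ?_⟩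
    calc _ ≤ (Fintype.piFinset (fun _ : Fin h => (∅ : Finset ℤ))).card :=
        Finset.card_filter_le _ _
    _ = 0 := by
        rw [Fintype.card_piFinset]
        simp
        omega
    _ ≤ g := Nat.zero_le g
  have hbdd : BddAbove {q | ∃ A : Fin h → Finset ℤ,
      (∀ i, A i ⊆ Finset.Icc 1 (n : ℤ)) ∧ (∀ i, (A i).card = q) ∧
      ∀ m : ℤ, ((Fintype.piFinset A).filter (fun v => ∑ i, c i * v i = m)).card ≤ g} := by
    refine ⟨n, fun q hq => ?_⟩
    obtain ⟨A, hsub, hcard, _⟩ := hq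
    have := Finset.card_le_card (hsub ⟨0, by omega⟩)
    rw [hcard] at this
    simpa [Int.card_Icc] using this
  obtain ⟨A, hsub, hcard, hrep⟩ := Nat.sSup_mem hne hbdd
  exact key_count h hh c hc g hg n _ A hsub hcard hrep

theorem stmt_10 (h : ℕ) (hh : 2 ≤ h) (c : Fin h → ℤ) (hc : ∀ i, c i ≠ 0)
    (g : ℕ) (hg : 0 < g) :
    Filter.limsup
      (fun n : ℕ => (((Fphi h c g n : ℝ) / (n : ℝ) ^ ((1 : ℝ) / h) : ℝ) : EReal))
      Filter.atTop
      ≤ ((((2 * (g : ℤ) * ∑ i, |c i| : ℤ) : ℝ) ^ ((1 : ℝ) / h) : ℝ) : EReal) := by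
  set K : ℤ := 2 * (g : ℤ) * ∑ i, |c i| with hK
  have hKnn : (0:ℝ) ≤ (K:ℝ) := by
    have h0 : (0:ℤ) ≤ K := by positivity
    exact_mod_cast h0
  have hh0 : (h:ℝ) ≠ 0 := by positivity
  refine Filter.limsup_le_of_le (by isBoundedDefault) ?_
  filter_upwards [Filter.eventually_ge_atTop 1] with n hn
  rw [EReal.coe_le_coe_iff]
  have hnpos : (0:ℝ) < (n:ℝ) := by exact_mod_cast hn
  have hq0 : (0:ℝ) ≤ (Fphi h c g n : ℝ) := Nat.cast_nonneg _
  have hZ := Fphi_pow_le h hh c hc g hg n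
  have hR : ((Fphi h c g n : ℝ)) ^ h ≤ (K:ℝ) * n := by exact_mod_cast hZ
  rw [div_le_iff₀ (Real.rpow_pos_of_pos hnpos _), ← Real.mul_rpow hKnn hnpos.le]
  calc (Fphi h c g n : ℝ) = (((Fphi h c g n : ℝ)) ^ h) ^ ((1:ℝ)/h) := by
        rw [← Real.rpow_natCast ((Fphi h c g n : ℝ)) h, ← Real.rpow_mul hq0,
          mul_one_div, div_self hh0, Real.rpow_one]
  _ ≤ ((K:ℝ) * n) ^ ((1:ℝ)/h) :=
        Real.rpow_le_rpow (by positivity) hR (by positivity)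
end

section
/- Let h ≥ 2 and let 𝒫(h) be the (finite) set of primes p such that p − 1 divides h. Let c_1, ..., c_h be nonzero integers such that gcd(c_i, p) = 1 for all i ∈ {1, ..., h} and all p ∈ 𝒫(h). Then there exist positive integers u and Q with gcd(u, Q) = 1 such that every prime q with q ≡ u (mod Q) satisfies gcd(q^h − 1, c_i) = 1 for all i ∈ {1, ..., h}. -/
/-!
Let `S` be the set of primes dividing some `c i`; the hypothesis says `p - 1 ∤ h` for every
`p ∈ S`. By the Chinese remainder theorem choose `u` to be a primitive root modulo every
`p ∈ S` and put `Q = ∏ p ∈ S, p`. A prime `q ≡ u (mod Q)` then has order `p - 1` modulo each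
`p ∈ S`, so `q ^ h ≢ 1 (mod p)`, and no prime divides both `q ^ h - 1` and some `c i`.
-/

lemma Int.gcd_eq_one_of_forall_prime {a b : ℤ}
    (H : ∀ p : ℕ, p.Prime → (p : ℤ) ∣ a → ¬ (p : ℤ) ∣ b) : Int.gcd a b = 1 :=
  Nat.coprime_of_dvd fun p hp hpa hpb =>
    H p hp (Int.natCast_dvd.mpr hpa) (Int.natCast_dvd.mpr hpb)

lemma ZMod.exists_natCast_orderOf_eq (p : ℕ) [Fact p.Prime] :
    ∃ v : ℕ, orderOf (v : ZMod p) = p - 1 := by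
  obtain ⟨g, hg⟩ := IsCyclic.exists_ofOrder_eq_natCard (α := (ZMod p)ˣ)
  refine ⟨(g : ZMod p).val, ?_⟩
  rw [ZMod.natCast_zmod_val, orderOf_units, hg, Nat.card_eq_fintype_card, ZMod.card_units]

lemma Nat.coprime_of_orderOf_natCast_ne_zero {a n : ℕ} (ha : orderOf (a : ZMod n) ≠ 0) :
    a.Coprime n :=
  (ZMod.isUnit_iff_coprime a n).mp (orderOf_ne_zero_iff.mp ha).isUnit

lemma Int.not_dvd_pow_sub_one_of_not_orderOf_dvd {a : ℤ} {n h : ℕ}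
    (hord : ¬ orderOf (a : ZMod n) ∣ h) : ¬ (n : ℤ) ∣ a ^ h - 1 := by
  intro hdvd
  apply hord
  apply orderOf_dvd_of_pow_eq_one
  have hzero := (ZMod.intCast_zmod_eq_zero_iff_dvd _ n).mpr hdvd
  push_cast at hzero
  exact sub_eq_zero.mp hzero

lemma exists_residue_forall_not_dvd_pow_sub_one {S : Finset ℕ} {h : ℕ}
    (hS : ∀ p ∈ S, p.Prime ∧ ¬ (p - 1) ∣ h) :
    ∃ u Q : ℕ, 0 < u ∧ 0 < Q ∧ Nat.gcd u Q = 1 ∧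
      ∀ q : ℕ, q ≡ u [MOD Q] → ∀ p ∈ S, ¬ (p : ℤ) ∣ (q : ℤ) ^ h - 1 := by
  have hroot : ∀ p ∈ S, ∃ v : ℕ, orderOf (v : ZMod p) = p - 1 := fun p hp =>
    haveI := Fact.mk (hS p hp).1
    ZMod.exists_natCast_orderOf_eq p
  choose! v hv using hroot
  have hS0 : ∀ p ∈ S, p ≠ 0 := fun p hp => (hS p hp).1.ne_zero
  have hcop : Set.Pairwise (S : Set ℕ) (Function.onFun Nat.Coprime id) := fun p hp r hr hne =>
    (Nat.coprime_primes (hS p hp).1 (hS r hr).1).mpr hne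
  obtain ⟨u₀, hu₀⟩ := Nat.chineseRemainderOfFinset v id S hS0 hcop
  set Q := ∏ p ∈ S, p
  have hQ : 0 < Q := Finset.prod_pos fun p hp => (hS p hp).1.pos
  -- `u₀ + Q` rather than `u₀`, which may be `0` when `S = ∅`
  have horder : ∀ q : ℕ, q ≡ u₀ + Q [MOD Q] → ∀ p ∈ S, orderOf (q : ZMod p) = p - 1 := by
    intro q hq p hp
    have hqv : q ≡ v p [MOD p] :=
      ((hq.trans Nat.add_modEq_right).of_dvd (Finset.dvd_prod_of_mem id hp)).trans (hu₀ p hp)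
    rw [(ZMod.natCast_eq_natCast_iff _ _ _).mpr hqv, hv p hp]
  refine ⟨u₀ + Q, Q, by omega, hQ, ?_, fun q hq p hp => ?_⟩
  · refine Nat.Coprime.prod_right fun p hp => Nat.coprime_of_orderOf_natCast_ne_zero ?_
    rw [horder _ Nat.ModEq.rfl p hp]
    exact (Nat.sub_pos_of_lt (hS p hp).1.one_lt).ne'
  · apply Int.not_dvd_pow_sub_one_of_not_orderOf_dvd
    rw [Int.cast_natCast, horder q hq p hp]
    exact (hS p hp).2

theorem stmt_13_general (h : ℕ) (c : Fin h → ℤ) (hc : ∀ i, c i ≠ 0)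
    (hcp : ∀ i, ∀ p : ℕ, p.Prime → (p - 1) ∣ h → Int.gcd (c i) p = 1) :
    ∃ u Q : ℕ, 0 < u ∧ 0 < Q ∧ Nat.gcd u Q = 1 ∧
      ∀ q : ℕ, q.Prime → q ≡ u [MOD Q] →
        ∀ i, Int.gcd ((q : ℤ) ^ h - 1) (c i) = 1 := by
  set S := Finset.univ.biUnion fun i => (c i).natAbs.primeFactors
  have hS : ∀ p ∈ S, p.Prime ∧ ¬ (p - 1) ∣ h := by
    intro p hp
    obtain ⟨i, -, hpi⟩ := Finset.mem_biUnion.mp hp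
    obtain ⟨hprime, hdvd, -⟩ := Nat.mem_primeFactors.mp hpi
    refine ⟨hprime, fun hph => hprime.one_lt.ne' ?_⟩
    rw [← hcp i p hprime hph]
    exact (Nat.gcd_eq_right hdvd).symm
  obtain ⟨u, Q, hu, hQ, huQ, hres⟩ := exists_residue_forall_not_dvd_pow_sub_one hS
  refine ⟨u, Q, hu, hQ, huQ, fun q _ hq i => Int.gcd_eq_one_of_forall_prime fun p hp hpq hpc => ?_⟩
  refine hres q hq p ?_ hpq
  exact Finset.mem_biUnion.mpr ⟨i, Finset.mem_univ i, Nat.mem_primeFactors.mpr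
    ⟨hp, Int.natCast_dvd.mp hpc, Int.natAbs_ne_zero.mpr (hc i)⟩⟩

theorem stmt_13 (h : ℕ) (hh : 2 ≤ h) (c : Fin h → ℤ) (hc : ∀ i, c i ≠ 0)
    (hcp : ∀ i, ∀ p : ℕ, p.Prime → (p - 1) ∣ h → Int.gcd (c i) p = 1) :
    ∃ u Q : ℕ, 0 < u ∧ 0 < Q ∧ Nat.gcd u Q = 1 ∧
      ∀ q : ℕ, q.Prime → q ≡ u [MOD Q] →
        ∀ i, Int.gcd ((q : ℤ) ^ h - 1) (c i) = 1 :=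
  stmt_13_general h c hc hcp
end

section
/- Let h ≥ 2, let φ = c_1x_1 + ... + c_hx_h be a linear form with nonzero integer coefficients, and let q be a prime such that gcd(q^h − 1, c_i) = 1 for all i ∈ {1, ..., h}. Then there exists an h-tuple 𝒜 = (A_1, ..., A_h) of sets of integers with A_i ⊆ {1, 2, ..., q^h − 2} and |A_i| = q for all i ∈ {1, ..., h} such that 𝒜 is a φ-Sidon system of multiplicity h!. Equivalently, F_{φ,h!}(q^h − 2) ≥ q. -/
/-!
Bose–Chowla construction. Let `θ` generate `𝔽_{q^h}` over `𝔽_q`, so that its minimal polynomial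
has degree `h`, and let `e t ∈ ℤ/(q^h - 1)` be the discrete logarithm of `θ - t` for `t ∈ 𝔽_q`.
Then `e` is a `B_h`-map: the sum `e t₁ + ⋯ + e t_h` determines `∏ (θ - tᵢ)`, which is the value at
`θ` of a monic polynomial of degree `h` with roots `tᵢ`; two different such polynomials differ by a
nonzero polynomial of degree `< h` vanishing at `θ`, so the multiset `{tᵢ}` is determined.
As `cᵢ` is a unit modulo `q^h - 1`, take `Aᵢ` to be the residues of `cᵢ⁻¹ e t` in `[1, q^h - 2]`
(`e t ≠ 0` because `θ ∉ 𝔽_q`). A solution of `∑ cᵢ aᵢ = m` gives `∑ e tᵢ = m` modulo `q^h - 1`,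
so its parameters form a fixed multiset, and at most `h!` tuples have a given multiset.
-/

open Polynomial Finset Function
open scoped Nat

lemma card_le_factorial_of_forall_map_univ_eq {α : Type*} {n : ℕ} (S : Finset (Fin n → α))
    (hS : ∀ s ∈ S, ∀ t ∈ S, univ.val.map s = univ.val.map t) : #S ≤ n ! := by
  classical
  -- any linear order will do: a tuple is determined by its multiset and its sorting permutation
  let : LinearOrder α := IsWellOrder.linearOrder WellOrderingRel
  have sort_injOn : Set.InjOn Tuple.sort (S : Set (Fin n → α)) := by
    intro s hs t ht hst
    have hperm : (List.ofFn (s ∘ Tuple.sort s)).Perm (List.ofFn (t ∘ Tuple.sort t)) := by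
      refine ((Equiv.Perm.ofFn_comp_perm _ s).trans ?_).trans (Equiv.Perm.ofFn_comp_perm _ t).symm
      simpa using hS s hs t ht
    have hsorted : s ∘ Tuple.sort s = t ∘ Tuple.sort t :=
      List.ofFn_injective <| hperm.eq_of_sortedLE
        (List.sortedLE_ofFn_iff.2 (Tuple.monotone_sort s))
        (List.sortedLE_ofFn_iff.2 (Tuple.monotone_sort t))
    rw [hst] at hsorted
    exact (Tuple.sort t).surjective.injective_comp_right hsorted
  calc #S ≤ #(univ : Finset (Equiv.Perm (Fin n))) :=
        card_le_card_of_injOn _ (fun _ _ => mem_univ _) sort_injOn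
    _ = n ! := by simp [Fintype.card_perm]

lemma multiset_eq_of_prod_sub_eq {K L : Type*} [Field K] [Field L] [Algebra K L] {θ : L}
    {h : ℕ} (hθ : h ≤ (minpoly K θ).natDegree) {M M' : Multiset K} (hM : M.card = h)
    (hM' : M'.card = h)
    (hprod : (M.map (θ - algebraMap K L ·)).prod = (M'.map (θ - algebraMap K L ·)).prod) :
    M = M' := by
  have aeval_prod (M : Multiset K) :
      aeval θ (M.map (X - C ·)).prod = (M.map (θ - algebraMap K L ·)).prod := by
    simp [map_multiset_prod, Multiset.map_map]
  set P := (M.map (X - C ·)).prod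
  set P' := (M'.map (X - C ·)).prod
  suffices P = P' by simpa [P, P'] using congrArg roots this
  by_contra hne
  have hP : P.Monic := monic_multiset_prod_of_monic _ _ fun a _ => monic_X_sub_C a
  have hP' : P'.Monic := monic_multiset_prod_of_monic _ _ fun a _ => monic_X_sub_C a
  have hdeg : P.natDegree = h := by simp [P, hM]
  have hdeg' : P'.natDegree = h := by simp [P', hM']
  have hlt : (P - P').natDegree < h := by
    rw [← hdeg]
    refine natDegree_lt_natDegree (sub_ne_zero.2 hne) (degree_sub_lt_left ?_ hP.ne_zero ?_)
    · rw [degree_eq_natDegree hP.ne_zero, degree_eq_natDegree hP'.ne_zero, hdeg, hdeg']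
    · rw [hP.leadingCoeff, hP'.leadingCoeff]
  have hdvd : minpoly K θ ∣ P - P' := minpoly.dvd K θ (by simp [P, P', aeval_prod, hprod])
  have hle := natDegree_le_of_dvd hdvd (sub_ne_zero.2 hne)
  omega

def IsBhMap {α M : Type*} [AddCommMonoid M] (h : ℕ) (f : α → M) : Prop :=
  ∀ s t : Fin h → α, ∑ i, f (s i) = ∑ i, f (t i) → univ.val.map s = univ.val.map t

lemma IsBhMap.card_le_factorial {α M : Type*} [Fintype α] [AddCommMonoid M] [DecidableEq M]
    {h : ℕ} {f : α → M} (hf : IsBhMap h f) (m : M) :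
    #{s : Fin h → α | ∑ i, f (s i) = m} ≤ h ! :=
  card_le_factorial_of_forall_map_univ_eq _ fun s hs t ht =>
    hf s t ((mem_filter.1 hs).2.trans (mem_filter.1 ht).2.symm)

lemma isBhMap_of_le_natDegree_minpoly {K L M : Type*} [Field K] [Field L] [Algebra K L]
    [AddCommMonoid M] {θ : L} {h : ℕ} (hθ : h ≤ (minpoly K θ).natDegree)
    (ψ : Lˣ →* Multiplicative M) (hψ : Injective ψ) (u : K → Lˣ)
    (hu : ∀ t, (u t : L) = θ - algebraMap K L t) :
    IsBhMap h fun t => (ψ (u t)).toAdd := by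
  intro s t hst
  have hunits : ∏ i, u (s i) = ∏ i, u (t i) := hψ <| by
    simpa [map_prod, ← toAdd_prod] using congrArg Multiplicative.ofAdd hst
  refine multiset_eq_of_prod_sub_eq hθ (by simp) (by simp) ?_
  simpa [Multiset.map_map, hu, List.prod_ofFn] using congrArg Units.val hunits

lemma exists_isBhMap_zmod {q h : ℕ} (hq : q.Prime) (hh : 2 ≤ h) :
    ∃ e : ZMod q → ZMod (q ^ h - 1), IsBhMap h e ∧ Injective e ∧ ∀ t, e t ≠ 0 := by
  have : Fact q.Prime := ⟨hq⟩
  let L := GaloisField q h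
  obtain ⟨θ, hθ⟩ := Field.exists_primitive_element_of_finite_top (ZMod q) L
  have hdeg : (minpoly (ZMod q) θ).natDegree = h := by
    rw [← IntermediateField.adjoin.finrank (.of_finite _ θ), hθ, IntermediateField.finrank_top',
      GaloisField.finrank q (by omega)]
  have hθK : ∀ t, θ ≠ algebraMap (ZMod q) L t := fun t hθt =>
    (minpoly.two_le_natDegree_iff (.of_finite _ θ)).1 (hdeg.symm ▸ hh) ⟨t, hθt.symm⟩
  obtain ⟨ψ⟩ : Nonempty (Lˣ ≃* Multiplicative (ZMod (q ^ h - 1))) := by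
    rw [← GaloisField.card q h (by omega), ← Nat.card_units]
    exact ⟨(zmodCyclicMulEquiv inferInstance).symm⟩
  let u t : Lˣ := Units.mk0 (θ - algebraMap (ZMod q) L t) (sub_ne_zero.2 (hθK t))
  refine ⟨fun t => (ψ (u t)).toAdd, isBhMap_of_le_natDegree_minpoly hdeg.ge
    ψ.toMonoidHom ψ.injective u fun _ => rfl, fun t t' htt' => ?_, fun t ht => ?_⟩
  · have := congrArg Units.val (ψ.injective (Multiplicative.toAdd.injective htt'))
    exact (algebraMap (ZMod q) L).injective (sub_right_injective this)
  · have hu : u t = 1 := ψ.injective (by simpa using congrArg Multiplicative.ofAdd ht)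
    refine hθK (t + 1) ?_
    rw [map_add, map_one, ← sub_eq_iff_eq_add']
    exact congrArg Units.val hu

lemma exists_sidon_system_of_isBhMap {K : Type*} [Fintype K] {N h : ℕ} [NeZero N]
    {e : K → ZMod N} (he : IsBhMap h e) (he_inj : Injective e) (he0 : ∀ t, e t ≠ 0)
    (c : Fin h → ℤ) (hc : ∀ i, IsUnit (c i : ZMod N)) :
    ∃ A : Fin h → Finset ℤ, (∀ i, A i ⊆ Icc 1 ((N : ℤ) - 1)) ∧ (∀ i, #(A i) = Fintype.card K) ∧
      ∀ m : ℤ, #{v ∈ Fintype.piFinset A | ∑ i, c i * v i = m} ≤ h ! := by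
  classical
  let a (i : Fin h) (t : K) : ℤ := (((c i : ZMod N)⁻¹ * e t).val : ℤ)
  have cast_mul_a (i t) : ((c i * a i t : ℤ) : ZMod N) = e t := by
    simp [a, ← mul_assoc, ZMod.mul_inv_of_unit _ (hc i)]
  have a_inj (i) : Injective (a i) := fun t t' htt' =>
    he_inj <| by rw [← cast_mul_a i t, ← cast_mul_a i t', htt']
  refine ⟨fun i => univ.image (a i), fun i => ?_, fun i => ?_, fun m => ?_⟩
  · simp only [subset_iff, mem_image, mem_univ, true_and, mem_Icc, forall_exists_index]
    rintro _ t rfl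
    have hval : ((c i : ZMod N)⁻¹ * e t).val ≠ 0 := fun h0 =>
      he0 t (by rw [← cast_mul_a i t]; simp [a, (ZMod.val_eq_zero _).1 h0])
    have := ZMod.val_lt ((c i : ZMod N)⁻¹ * e t)
    simp only [a]
    omega
  · rw [card_image_of_injective _ (a_inj i), card_univ]
  · rw [Fintype.piFinset_image, Fintype.piFinset_univ, filter_image]
    refine card_image_le.trans <| (card_le_card fun t ht => ?_).trans (he.card_le_factorial m)
    simp only [mem_filter, mem_univ, true_and] at ht ⊢
    rw [← ht, Int.cast_sum]
    simp only [cast_mul_a]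

lemma le_Fphi {h : ℕ} (hh : h ≠ 0) {c : Fin h → ℤ} {g n q : ℕ} (A : Fin h → Finset ℤ)
    (hA : ∀ i, A i ⊆ Icc 1 (n : ℤ)) (hcard : ∀ i, #(A i) = q)
    (hsidon : ∀ m : ℤ, #{v ∈ Fintype.piFinset A | ∑ i, c i * v i = m} ≤ g) :
    q ≤ Fphi h c g n := by
  refine le_csSup ⟨n, ?_⟩ ⟨A, hA, hcard, hsidon⟩
  rintro q' ⟨A', hA', hcard', -⟩
  have i₀ : Fin h := ⟨0, Nat.pos_of_ne_zero hh⟩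
  simpa [hcard' i₀] using card_le_card (hA' i₀)

theorem stmt_14_general (h : ℕ) (hh : 2 ≤ h) (c : Fin h → ℤ)
    (q : ℕ) (hq : q.Prime) (hqc : ∀ i, Int.gcd ((q : ℤ) ^ h - 1) (c i) = 1) :
    (∃ A : Fin h → Finset ℤ,
      (∀ i, A i ⊆ Finset.Icc 1 ((q : ℤ) ^ h - 2)) ∧
      (∀ i, (A i).card = q) ∧
      (∀ m : ℤ, ((Fintype.piFinset A).filter (fun v => ∑ i, c i * v i = m)).card ≤
        Nat.factorial h)) ∧
    q ≤ Fphi h c (Nat.factorial h) (q ^ h - 2) := by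
  have hqh : 4 ≤ q ^ h := (Nat.pow_le_pow_left hq.two_le 2).trans (Nat.pow_le_pow_right hq.pos hh)
  have : NeZero q := ⟨hq.ne_zero⟩
  have : NeZero (q ^ h - 1) := ⟨by omega⟩
  have hN : ((q ^ h - 1 : ℕ) : ℤ) = (q : ℤ) ^ h - 1 := by push_cast [show 1 ≤ q ^ h by omega]; rfl
  have hn : ((q ^ h - 2 : ℕ) : ℤ) = (q : ℤ) ^ h - 2 := by push_cast [show 2 ≤ q ^ h by omega]; rfl
  have hc (i) : IsUnit (c i : ZMod (q ^ h - 1)) := by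
    rw [ZMod.coe_int_isUnit_iff_isCoprime, hN]
    exact Int.isCoprime_iff_gcd_eq_one.2 (hqc i)
  obtain ⟨e, he, he_inj, he0⟩ := exists_isBhMap_zmod hq hh
  obtain ⟨A, hA, hcard, hsidon⟩ := exists_sidon_system_of_isBhMap he he_inj he0 c hc
  rw [ZMod.card] at hcard
  have hA' (i) : A i ⊆ Icc 1 ((q : ℤ) ^ h - 2) := by
    rw [hN, sub_sub, one_add_one_eq_two] at hA
    exact hA i
  exact ⟨⟨A, hA', hcard, hsidon⟩, le_Fphi (by omega) A (hn ▸ hA') hcard hsidon⟩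

theorem stmt_14 (h : ℕ) (hh : 2 ≤ h) (c : Fin h → ℤ) (hc : ∀ i, c i ≠ 0)
    (q : ℕ) (hq : q.Prime) (hqc : ∀ i, Int.gcd ((q : ℤ) ^ h - 1) (c i) = 1) :
    (∃ A : Fin h → Finset ℤ,
      (∀ i, A i ⊆ Finset.Icc 1 ((q : ℤ) ^ h - 2)) ∧
      (∀ i, (A i).card = q) ∧
      (∀ m : ℤ, ((Fintype.piFinset A).filter (fun v => ∑ i, c i * v i = m)).card ≤
        Nat.factorial h)) ∧
    q ≤ Fphi h c (Nat.factorial h) (q ^ h - 2) :=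
  stmt_14_general h hh c q hq hqc
end
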